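/- (McDiarmid's bounded-difference inequality) Let X₁,...,X_m be independent random variables taking values in a set S, and let F: Sᵐ → ℝ satisfy |F(x) − F(x̂)| ≤ c_k whenever x and x̂ differ only in the k-th coordinate. Then for Y = F(X₁,...,X_m) and every t ≥ 0, Pr[|Y − E[Y]| ≥ t] ≤ 2 exp(−2t² / Σ_{k=1}^m c_k²). -/

import Mathlib

/-!
Peel off the first coordinate. With the other coordinates `y` fixed, `s ↦ F (s, y)` oscillates by
at most `c₀`, so by Hoeffding's lemma `F - G` is sub-Gaussian with variance proxy `c₀² / 4` under
the first marginal, where `G y` is the average of `F (·, y)`. The average `G` again has bounded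
differences `c₁, …, c_{m-1}`, so by induction `G - 𝔼 G` is sub-Gaussian with proxy
`∑_{k ≥ 1} c_k² / 4`, and by Fubini the two proxies add. Independence makes the joint law of the
`X k` the product of their laws, and the Chernoff bound for a sub-Gaussian variable with proxy
`∑ c_k² / 4`, applied to both tails, gives `2 exp (-2 t² / ∑ c_k²)`.
-/

open MeasureTheory ProbabilityTheory Real
open scoped NNReal

def HasBoundedDifferences {ι S : Type*} (F : (ι → S) → ℝ) (c : ι → ℝ) : Prop :=
  ∀ (k : ι) (x x' : ι → S), (∀ j, j ≠ k → x j = x' j) → |F x - F x'| ≤ c k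

lemma exists_forall_mem_Icc_of_abs_sub_le {α : Type*} [Nonempty α] {f : α → ℝ} {c : ℝ}
    (h : ∀ a b, |f a - f b| ≤ c) : ∃ a, ∀ x, f x ∈ Set.Icc a (a + c) := by
  obtain ⟨x₀⟩ := ‹Nonempty α›
  have hbdd : BddBelow (Set.range f) :=
    ⟨f x₀ - c, by rintro _ ⟨x, rfl⟩; linarith [(abs_le.1 (h x₀ x)).2]⟩
  refine ⟨⨅ x, f x, fun x => ⟨ciInf_le hbdd x, ?_⟩⟩
  have : f x - c ≤ ⨅ y, f y := le_ciInf fun y => by linarith [(abs_le.1 (h x y)).2]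
  linarith

section BoundedOscillation

variable {α : Type*} [MeasurableSpace α] {μ : Measure α} [IsProbabilityMeasure μ]
  {f : α → ℝ} {c : ℝ}

lemma integrable_of_abs_sub_le (hf : AEMeasurable f μ) (h : ∀ a b, |f a - f b| ≤ c) :
    Integrable f μ :=
  have := nonempty_of_isProbabilityMeasure μ
  let ⟨a, ha⟩ := exists_forall_mem_Icc_of_abs_sub_le h
  .of_mem_Icc a (a + c) hf (ae_of_all μ ha)

lemma hasSubgaussianMGF_of_abs_sub_le (hf : AEMeasurable f μ) (h : ∀ a b, |f a - f b| ≤ c) :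
    HasSubgaussianMGF (fun x => f x - μ[f]) ((‖c‖₊ / 2) ^ 2) μ := by
  have := nonempty_of_isProbabilityMeasure μ
  obtain ⟨a, ha⟩ := exists_forall_mem_Icc_of_abs_sub_le h
  simpa using hasSubgaussianMGF_of_mem_Icc hf (ae_of_all μ ha)

end BoundedOscillation

lemma measurable_fin_cons_uncurry {S : Type*} [MeasurableSpace S] {m : ℕ} :
    Measurable (fun z : S × (Fin m → S) => (Fin.cons z.1 z.2 : Fin (m + 1) → S)) :=
  measurable_pi_iff.2 fun j => by cases j using Fin.cases <;> simp <;> fun_prop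

namespace HasBoundedDifferences

variable {S : Type*} {m : ℕ} {F : (Fin (m + 1) → S) → ℝ} {c : Fin (m + 1) → ℝ}

lemma abs_sub_cons_le (h : HasBoundedDifferences F c) (s s' : S) (y : Fin m → S) :
    |F (Fin.cons s y) - F (Fin.cons s' y)| ≤ c 0 :=
  h 0 _ _ fun j hj => by obtain ⟨i, rfl⟩ := Fin.exists_succ_eq.2 hj; simp

lemma cons (h : HasBoundedDifferences F c) (s : S) :
    HasBoundedDifferences (fun y : Fin m → S => F (Fin.cons s y)) (fun j => c j.succ) :=
  fun k y y' hyy' => h k.succ _ _ fun j hj => by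
    cases j using Fin.cases with
    | zero => rfl
    | succ i => simpa using hyy' i (fun hik => hj (hik ▸ rfl))

lemma integral_cons [MeasurableSpace S] {ν : Measure S} [IsProbabilityMeasure ν]
    (hF : Measurable F) (h : HasBoundedDifferences F c) :
    HasBoundedDifferences (fun y : Fin m → S => ∫ s, F (Fin.cons s y) ∂ν) (fun j => c j.succ) := by
  intro k y y' hyy'
  have hint (y : Fin m → S) : Integrable (fun s => F (Fin.cons s y)) ν :=
    integrable_of_abs_sub_le
      (hF.comp (measurable_fin_cons_uncurry.comp measurable_prodMk_right)).aemeasurable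
      fun s s' => h.abs_sub_cons_le s s' y
  rw [← integral_sub (hint y) (hint y')]
  simpa using norm_integral_le_of_norm_le_const (μ := ν)
    (f := fun s => F (Fin.cons s y) - F (Fin.cons s y'))
    (.of_forall fun s => (h.cons s) k y y' hyy')

end HasBoundedDifferences

namespace ProbabilityTheory.HasSubgaussianMGF

lemma integral_eq_zero {Ω : Type*} [MeasurableSpace Ω] {μ : Measure Ω} [IsProbabilityMeasure μ]
    {X : Ω → ℝ} {c : ℝ≥0} (h : HasSubgaussianMGF X c μ) : μ[X] = 0 := by
  have hmgf : HasDerivAt (mgf X μ) μ[X] 0 := by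
    simpa using hasDerivAt_mgf (X := X) (μ := μ) (t := 0)
      (by simp [h.integrableExpSet_eq_univ])
  have hgauss : HasDerivAt (fun t => exp (c * t ^ 2 / 2)) 0 0 := by
    simpa using (((hasDerivAt_pow 2 (0 : ℝ)).const_mul (c : ℝ)).div_const 2).exp
  have hmax : IsLocalMax (fun t => mgf X μ t - exp (c * t ^ 2 / 2)) 0 :=
    Filter.Eventually.of_forall fun t => by simpa [mgf_zero] using h.mgf_le t
  simpa using hmax.hasDerivAt_eq_zero (hmgf.sub hgauss)

lemma integral_eq_of_sub_const {Ω : Type*} [MeasurableSpace Ω] {μ : Measure Ω}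
    [IsProbabilityMeasure μ] {X : Ω → ℝ} {a : ℝ} {c : ℝ≥0}
    (h : HasSubgaussianMGF (fun ω => X ω - a) c μ) : μ[X] = a := by
  have hX : Integrable X μ := by
    simpa [sub_eq_add_neg] using integrable_add_const_iff.1 h.integrable
  have := h.integral_eq_zero
  rw [integral_sub hX (integrable_const a)] at this
  simpa [sub_eq_zero] using this

lemma prod_add {α β : Type*} [MeasurableSpace α] [MeasurableSpace β]
    {μ : Measure α} {ν : Measure β} [SFinite μ] [SFinite ν] {Z : α × β → ℝ} {W : β → ℝ}
    {cZ cW : ℝ≥0} (hZm : AEStronglyMeasurable Z (μ.prod ν))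
    (hZ : ∀ y, HasSubgaussianMGF (fun x => Z (x, y)) cZ μ) (hW : HasSubgaussianMGF W cW ν) :
    HasSubgaussianMGF (fun p => Z p + W p.2) (cZ + cW) (μ.prod ν) := by
  have hsec (t : ℝ) (y : β) :
      ∫ x, exp (t * (Z (x, y) + W y)) ∂μ = mgf (fun x => Z (x, y)) μ t * exp (t * W y) := by
    simp_rw [mul_add, exp_add]
    exact integral_mul_const _ _
  have hint (t : ℝ) : Integrable (fun p => exp (t * (Z p + W p.2))) (μ.prod ν) := by
    have hm : AEStronglyMeasurable (fun p => exp (t * (Z p + W p.2))) (μ.prod ν) :=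
      continuous_exp.comp_aestronglyMeasurable
        ((hZm.add hW.aestronglyMeasurable.comp_snd).const_mul t)
    refine (integrable_prod_iff' hm).2 ⟨.of_forall fun y => ?_, ?_⟩
    · simp_rw [mul_add, exp_add]
      exact ((hZ y).integrable_exp_mul t).mul_const _
    · refine ((hW.integrable_exp_mul t).const_mul (exp (cZ * t ^ 2 / 2))).mono'
        hm.norm.prod_swap.integral_prod_right' (.of_forall fun y => ?_)
      simp only [Real.norm_eq_abs, abs_exp, hsec]
      rw [abs_of_nonneg (mul_nonneg mgf_nonneg (exp_nonneg _))]
      exact mul_le_mul_of_nonneg_right ((hZ y).mgf_le t) (exp_nonneg _)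
  refine ⟨hint, fun t => ?_⟩
  calc mgf (fun p => Z p + W p.2) (μ.prod ν) t
      = ∫ y, mgf (fun x => Z (x, y)) μ t * exp (t * W y) ∂ν := by
        rw [mgf, integral_prod_symm _ (hint t)]
        exact integral_congr_ae (.of_forall (hsec t))
    _ ≤ ∫ y, exp (cZ * t ^ 2 / 2) * exp (t * W y) ∂ν := by
        refine integral_mono_of_nonneg (.of_forall fun y => mul_nonneg mgf_nonneg (exp_nonneg _))
          ((hW.integrable_exp_mul t).const_mul _) (.of_forall fun y => ?_)
        exact mul_le_mul_of_nonneg_right ((hZ y).mgf_le t) (exp_nonneg _)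
    _ = exp (cZ * t ^ 2 / 2) * mgf W ν t := integral_const_mul _ _
    _ ≤ exp (cZ * t ^ 2 / 2) * exp (cW * t ^ 2 / 2) := by gcongr; exact hW.mgf_le t
    _ = exp ((cZ + cW : ℝ≥0) * t ^ 2 / 2) := by rw [← exp_add]; push_cast; ring_nf

lemma measureReal_abs_ge_le {Ω : Type*} [MeasurableSpace Ω] {μ : Measure Ω} [IsFiniteMeasure μ]
    {X : Ω → ℝ} {c : ℝ≥0} (h : HasSubgaussianMGF X c μ) {ε : ℝ} (hε : 0 ≤ ε) :
    μ.real {ω | ε ≤ |X ω|} ≤ 2 * exp (-ε ^ 2 / (2 * c)) := by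
  have hsplit : {ω | ε ≤ |X ω|} ⊆ {ω | ε ≤ X ω} ∪ {ω | ε ≤ (-X) ω} := by
    rintro ω (hω : ε ≤ |X ω|)
    rcases le_abs'.1 hω with hneg | hpos
    · exact .inr (show ε ≤ -X ω by linarith)
    · exact .inl hpos
  calc μ.real {ω | ε ≤ |X ω|} ≤ μ.real {ω | ε ≤ X ω} + μ.real {ω | ε ≤ (-X) ω} :=
        (measureReal_mono hsplit).trans (measureReal_union_le _ _)
    _ ≤ exp (-ε ^ 2 / (2 * c)) + exp (-ε ^ 2 / (2 * c)) :=
        add_le_add (h.measure_ge_le hε) (h.neg.measure_ge_le hε)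
    _ = 2 * exp (-ε ^ 2 / (2 * c)) := by ring

end ProbabilityTheory.HasSubgaussianMGF

theorem hasSubgaussianMGF_pi_of_hasBoundedDifferences {S : Type*} [MeasurableSpace S] {m : ℕ}
    (ν : Fin m → Measure S) [∀ k, IsProbabilityMeasure (ν k)] {F : (Fin m → S) → ℝ}
    (hF : Measurable F) {c : Fin m → ℝ} (h : HasBoundedDifferences F c) :
    HasSubgaussianMGF (fun x => F x - ∫ y, F y ∂Measure.pi ν) (∑ k, (‖c k‖₊ / 2) ^ 2)
      (Measure.pi ν) := by
  induction m with
  | zero =>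
    have hconst (x : Fin 0 → S) : F x - ∫ y, F y ∂Measure.pi ν = 0 := by
      rw [show F = fun _ => F x from funext fun y => congrArg F (Subsingleton.elim y x)]
      simp
    simp [hconst]
  | succ m ih =>
    set G : (Fin m → S) → ℝ := fun y => ∫ s, F (Fin.cons s y) ∂ν 0
    have hFcons : Measurable fun z : S × (Fin m → S) => F (Fin.cons z.1 z.2) :=
      hF.comp measurable_fin_cons_uncurry
    have hG : Measurable G := hFcons.stronglyMeasurable.integral_prod_left'.measurable
    have hsec (y : Fin m → S) :
        HasSubgaussianMGF (fun s => F (Fin.cons s y) - G y) ((‖c 0‖₊ / 2) ^ 2) (ν 0) :=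
      hasSubgaussianMGF_of_abs_sub_le (hFcons.comp measurable_prodMk_right).aemeasurable
        fun s s' => h.abs_sub_cons_le s s' y
    have hprod := HasSubgaussianMGF.prod_add (Z := fun z => F (Fin.cons z.1 z.2) - G z.2)
      (hFcons.sub (hG.comp measurable_snd)).aestronglyMeasurable hsec
      (ih (fun j => ν j.succ) hG (h.integral_cons hF))
    have hmp := measurePreserving_piFinSuccAbove ν 0
    simp only [Fin.succAbove_zero] at hmp
    rw [← hmp.map_eq] at hprod
    have hcentered : HasSubgaussianMGF (fun x => F x - ∫ y, G y ∂Measure.pi fun j => ν j.succ)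
        (∑ k, (‖c k‖₊ / 2) ^ 2) (Measure.pi ν) := by
      convert hprod.of_map hmp.measurable.aemeasurable using 1
      · funext x
        simp [Fin.cons_self_tail, MeasurableEquiv.piFinSuccAbove]
      · rw [Fin.sum_univ_succ]
    rwa [hcentered.integral_eq_of_sub_const]

theorem mcdiarmid_bounded_difference_general {Ω : Type*} [MeasurableSpace Ω]
    (μ : Measure Ω) [IsProbabilityMeasure μ]
    {S : Type*} [MeasurableSpace S] {m : ℕ} (X : Fin m → Ω → S)
    (hmeas : ∀ k, Measurable (X k))
    (hindep : ProbabilityTheory.iIndepFun X μ)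
    (F : (Fin m → S) → ℝ) (hF : Measurable F)
    (c : Fin m → ℝ)
    (hbd : ∀ (k : Fin m) (x x' : Fin m → S),
      (∀ j, j ≠ k → x j = x' j) → |F x - F x'| ≤ c k)
    (t : ℝ) (ht : 0 ≤ t) :
    (μ {ω | t ≤ |F (fun k => X k ω) - ∫ ω', F (fun k => X k ω') ∂μ|}).toReal
      ≤ 2 * Real.exp (-2 * t ^ 2 / ∑ k, c k ^ 2) := by
  have hJ : Measurable fun ω k => X k ω := measurable_pi_lambda _ hmeas
  have hlaw : μ.map (fun ω k => X k ω) = Measure.pi fun k => μ.map (X k) :=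
    hindep.map_fun_eq_pi_map fun k => (hmeas k).aemeasurable
  have (k : Fin m) : IsProbabilityMeasure (μ.map (X k)) :=
    Measure.isProbabilityMeasure_map (hmeas k).aemeasurable
  have hsub := hasSubgaussianMGF_pi_of_hasBoundedDifferences (fun k => μ.map (X k)) hF hbd
  rw [← hlaw, integral_map hJ.aemeasurable hF.aestronglyMeasurable] at hsub
  have hvar : 2 * ((∑ k, (‖c k‖₊ / 2) ^ 2 : ℝ≥0) : ℝ) = (∑ k, c k ^ 2) / 2 := by
    push_cast
    simp only [Real.norm_eq_abs, div_pow, sq_abs, ← Finset.sum_div]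
    ring
  refine ((hsub.of_map hJ.aemeasurable).measureReal_abs_ge_le ht).trans_eq ?_
  rw [hvar, div_div_eq_mul_div]
  ring_nf

theorem mcdiarmid_bounded_difference {Ω : Type*} [MeasurableSpace Ω]
    (μ : Measure Ω) [IsProbabilityMeasure μ]
    {S : Type*} [MeasurableSpace S] {m : ℕ} (X : Fin m → Ω → S)
    (hmeas : ∀ k, Measurable (X k))
    (hindep : ProbabilityTheory.iIndepFun X μ)
    (F : (Fin m → S) → ℝ) (hF : Measurable F)
    (c : Fin m → ℝ) (hc : ∀ k, 0 < c k)
    (hbd : ∀ (k : Fin m) (x x' : Fin m → S),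
      (∀ j, j ≠ k → x j = x' j) → |F x - F x'| ≤ c k)
    (t : ℝ) (ht : 0 ≤ t) :
    (μ {ω | t ≤ |F (fun k => X k ω) - ∫ ω', F (fun k => X k ω') ∂μ|}).toReal
      ≤ 2 * Real.exp (-2 * t ^ 2 / ∑ k, c k ^ 2) :=
  mcdiarmid_bounded_difference_general μ X hmeas hindep F hF c hbd t ht
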